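/- Let c₅ ∈ ℝ and H(u,v) = e^{−2v}(u² − v − 1/2 − c₅). For every h < 0, the level set {(u,v) ∈ ℝ² : H(u,v) = h} is a bounded subset of ℝ². (These level sets carry the closed periodic orbits of the unperturbed blow-up system.) -/

import Mathlib

/-!
Write `w = v + 1/2 + c₅`, so that `H = e^{-2v} (u² - w)`. A negative value of `H` forces
`u² < w`, which bounds `v` from below and `u` in terms of `v`. On the other hand `w ≤ e^{w-1}`
gives `H ≥ -e^{c₅ - 1/2 - v}`, so `H ≤ h < 0` bounds `v` from above by `c₅ - 1/2 - log (-h)`.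
-/

open Real

/-- Hamiltonian of the unperturbed blow-up system. -/
noncomputable def Ham (c₅ u v : ℝ) : ℝ :=
  Real.exp (-2 * v) * (u ^ 2 - v - 1 / 2 - c₅)

lemma sq_lt_of_Ham_neg {c₅ u v : ℝ} (hH : Ham c₅ u v < 0) : u ^ 2 < v + 1 / 2 + c₅ := by
  have := neg_of_mul_neg_right hH (exp_pos _).le
  linarith

lemma neg_exp_le_Ham (c₅ u v : ℝ) : -exp (c₅ - 1 / 2 - v) ≤ Ham c₅ u v := by
  have hw : v + 1 / 2 + c₅ ≤ exp (v + 1 / 2 + c₅ - 1) := by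
    linarith [add_one_le_exp (v + 1 / 2 + c₅ - 1)]
  calc -exp (c₅ - 1 / 2 - v) = -(exp (-2 * v) * exp (v + 1 / 2 + c₅ - 1)) := by
        rw [← exp_add]; ring_nf
    _ ≤ -(exp (-2 * v) * (v + 1 / 2 + c₅)) := by gcongr
    _ ≤ Ham c₅ u v := by
        unfold Ham
        nlinarith [mul_nonneg (exp_pos (-2 * v)).le (sq_nonneg u)]

lemma le_of_Ham_le {c₅ h u v : ℝ} (hh : h < 0) (hH : Ham c₅ u v ≤ h) :
    v ≤ c₅ - 1 / 2 - log (-h) := by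
  have : log (-h) ≤ c₅ - 1 / 2 - v :=
    (log_le_iff_le_exp (neg_pos.2 hh)).2 (by linarith [neg_exp_le_Ham c₅ u v])
  linarith

theorem isBounded_setOf_Ham_le (c₅ : ℝ) {h : ℝ} (hh : h < 0) :
    Bornology.IsBounded {p : ℝ × ℝ | Ham c₅ p.1 p.2 ≤ h} := by
  set vmax := c₅ - 1 / 2 - log (-h)
  refine ((Metric.isBounded_closedBall (x := 0) (r := √(vmax + 1 / 2 + c₅))).prod
    (Metric.isBounded_Icc (-(1 / 2 + c₅)) vmax)).subset ?_
  rintro ⟨u, v⟩ (hH : Ham c₅ u v ≤ h)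
  have hsq := sq_lt_of_Ham_neg (hH.trans_lt hh)
  have hv : v ≤ vmax := le_of_Ham_le hh hH
  refine ⟨?_, by linarith [sq_nonneg u], hv⟩
  rw [Metric.mem_closedBall, dist_zero_right, norm_eq_abs]
  exact abs_le_sqrt (show u ^ 2 ≤ vmax + 1 / 2 + c₅ by linarith)

/-- Negative level sets of the Hamiltonian are bounded: they carry the closed
periodic orbits of the unperturbed blow-up system. -/
theorem ham_negative_level_sets_bounded (c₅ : ℝ) :
    ∀ h : ℝ, h < 0 →
      Bornology.IsBounded {p : ℝ × ℝ | Ham c₅ p.1 p.2 = h} :=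
  fun _ hh => (isBounded_setOf_Ham_le c₅ hh).subset fun _ hp => le_of_eq hp
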